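/- Run the discounted OCP algorithm A_CP with hyperparameter ε > 0 and discount factors λ_t ∈ (0,∞) (λ_0 := 1), defined by: S*_{0,clip} = V*_{0,clip} = G*_0 = 0; prediction r_t = max(r̃_t, 0) where r̃_t = 0 if G*_{t-1} = 0 and otherwise r̃_t = ε·erfi( S*_{t-1,clip} / (2√(V*_{t-1,clip} + 2G*_{t-1}S*_{t-1,clip} + 16(G*_{t-1})²)) ) − ε·G*_{t-1}/√(V*_{t-1,clip} + 2G*_{t-1}S*_{t-1,clip} + 16(G*_{t-1})²) · exp( (S*_{t-1,clip})² / (4(V*_{t-1,clip} + 2G*_{t-1}S*_{t-1,clip} + 16(G*_{t-1})²)) ); feedback g*_t ∈ ∂f*_t(r_t) with f*_t convex on [0,∞) minimized at r*_t ∈ [0,∞) and g*_t ≤ 0 whenever r_t = r*_t; updates g*_{t,clip} = projection of g*_t onto [−λ_{t-1}G*_{t-1}, λ_{t-1}G*_{t-1}], S*_{t,clip} = λ_{t-1}·S*_{t-1,clip} − g*_{t,clip}, V*_{t,clip} = λ_{t-1}²·V*_{t-1,clip} + (g*_{t,clip})², G*_t = max(λ_{t-1}·G*_{t-1}, |g*_t|).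 Suppose the optimal radii satisfy r*_t ≤ D for all t, for some D > 0 not known to the algorithm. Then for all t ∈ ℕ_+, the discounted coverage metric S*_t := −Σ_{i=1}^t (∏_{j=i}^{t-1} λ_j)·g*_i satisfies |S*_t| ≤ 2·√(V*_{t,clip})·(1 + √(log(1 + 2D·ε^{-1}))) + 15·G*_t·(1 + √(log(1 + 2D·ε^{-1})))². -/

import Mathlib

open scoped BigOperators

/-- The (rescaled) imaginary error function `erfi(x) = ∫₀ˣ exp(u²) du`. -/
noncomputable def erfi (x : ℝ) : ℝ := ∫ u in (0:ℝ)..x, Real.exp (u^2)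

lemma integral_id_mul_exp_sq (x : ℝ) :
    ∫ u in (0:ℝ)..x, u * Real.exp (u^2) = (Real.exp (x^2) - 1) / 2 := by
  have h : ∀ u ∈ Set.uIcc (0:ℝ) x, HasDerivAt (fun v => Real.exp (v^2) / 2) (u * Real.exp (u^2)) u := by
    intro u _
    have h1 : HasDerivAt (fun v : ℝ => v^2) (2*u) u := by
      simpa using hasDerivAt_pow 2 u
    have h2 : HasDerivAt (fun v : ℝ => Real.exp (v^2)) (Real.exp (u^2) * (2*u)) u := h1.exp
    have h3 : HasDerivAt (fun v => Real.exp (v^2) / 2) (Real.exp (u^2) * (2*u) / 2) u := h2.div_const 2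
    convert h3 using 1
    ring
  have hint : IntervalIntegrable (fun u : ℝ => u * Real.exp (u^2)) MeasureTheory.volume 0 x :=
    (continuous_id.mul (Real.continuous_exp.comp (continuous_pow 2))).intervalIntegrable 0 x
  rw [intervalIntegral.integral_eq_sub_of_hasDerivAt h hint]
  simp [Real.exp_zero]
  ring

lemma erfi_lower {x : ℝ} (hx : 0 < x) : (Real.exp (x^2) - 1) / (2*x) ≤ erfi x := by
  have h1 : (∫ u in (0:ℝ)..x, x⁻¹ * (u * Real.exp (u^2))) ≤ ∫ u in (0:ℝ)..x, Real.exp (u^2) := by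
    apply intervalIntegral.integral_mono_on hx.le
    · exact (Continuous.intervalIntegrable (by continuity) 0 x)
    · exact (Continuous.intervalIntegrable (by continuity) 0 x)
    · intro u hu
      obtain ⟨hu0, hux⟩ := hu
      have h2 : u * Real.exp (u^2) ≤ x * Real.exp (u^2) :=
        mul_le_mul_of_nonneg_right hux (Real.exp_pos _).le
      calc x⁻¹ * (u*Real.exp (u^2)) ≤ x⁻¹ * (x*Real.exp (u^2)) :=
            mul_le_mul_of_nonneg_left h2 (inv_nonneg.mpr hx.le)
        _ = Real.exp (u^2) := by field_simp
  rw [intervalIntegral.integral_const_mul, integral_id_mul_exp_sq] at h1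
  unfold erfi
  calc (Real.exp (x^2) - 1)/(2*x) = x⁻¹ * ((Real.exp (x^2) - 1)/2) := by
        ring
    _ ≤ _ := h1

lemma erfi_nonpos {x : ℝ} (hx : x ≤ 0) : erfi x ≤ 0 := by
  unfold erfi
  rw [intervalIntegral.integral_symm]
  have h : 0 ≤ ∫ u in x..(0:ℝ), Real.exp (u^2) :=
    intervalIntegral.integral_nonneg hx (fun u _ => (Real.exp_pos _).le)
  linarith

lemma sqrt_le_of_sq_ge {A C : ℝ} (hC : 0 ≤ C) (h : A ≤ C^2) : Real.sqrt A ≤ C := by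
  calc Real.sqrt A ≤ Real.sqrt (C^2) := Real.sqrt_le_sqrt h
    _ = C := Real.sqrt_sq hC

lemma sqrt_add_le' {A B : ℝ} (hA : 0 ≤ A) (hB : 0 ≤ B) :
    Real.sqrt (A + B) ≤ Real.sqrt A + Real.sqrt B := by
  apply sqrt_le_of_sq_ge (by positivity)
  nlinarith [Real.sq_sqrt hA, Real.sq_sqrt hB,
    mul_nonneg (Real.sqrt_nonneg A) (Real.sqrt_nonneg B)]

lemma le_of_sq_le' {a b : ℝ} (hb : 0 ≤ b) (h : a^2 ≤ b^2) : a ≤ b := by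
  by_contra h'
  push_neg at h'
  nlinarith

section NumericLemmas

lemma exp_ub_lin {z : ℝ} (h0 : 0 ≤ z) (h1 : z ≤ 0.5) : Real.exp z ≤ 1 + 2*z := by
  have h2 : 1 - z ≤ Real.exp (-z) := by linarith [Real.add_one_le_exp (-z)]
  have h3 : Real.exp (-z) = (Real.exp z)⁻¹ := Real.exp_neg z
  have hp : 0 < Real.exp z := Real.exp_pos z
  have h4 : (1 - z) * Real.exp z ≤ 1 := by
    rw [h3] at h2
    calc (1-z)*Real.exp z ≤ (Real.exp z)⁻¹ * Real.exp z :=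
          mul_le_mul_of_nonneg_right h2 hp.le
      _ = 1 := inv_mul_cancel₀ (ne_of_gt hp)
  nlinarith [hp]

lemma exp_064 : (1.88:ℝ) ≤ Real.exp 0.64 := by
  have h1 : Real.exp 0.64 = Real.exp 0.02 ^ (32:ℕ) := by
    rw [← Real.exp_nat_mul]; norm_num
  have h2 : (1.02:ℝ) ≤ Real.exp 0.02 := by linarith [Real.add_one_le_exp (0.02:ℝ)]
  have h3 : (1.02:ℝ)^(32:ℕ) ≤ Real.exp 0.02 ^(32:ℕ) := pow_le_pow_left₀ (by norm_num) h2 32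
  have h4 : (1.88:ℝ) ≤ (1.02:ℝ)^(32:ℕ) := by norm_num
  rw [h1]; linarith

lemma exp_081 : (2.09:ℝ) ≤ Real.exp 0.81 := by
  have h1 : Real.exp 0.81 = Real.exp 0.2025 ^ (4:ℕ) := by
    rw [← Real.exp_nat_mul]; norm_num
  have h2 : (1.2025:ℝ) ≤ Real.exp 0.2025 := by linarith [Real.add_one_le_exp (0.2025:ℝ)]
  have h3 : (1.2025:ℝ)^(4:ℕ) ≤ Real.exp 0.2025 ^(4:ℕ) := pow_le_pow_left₀ (by norm_num) h2 4
  have h4 : (2.09:ℝ) ≤ (1.2025:ℝ)^(4:ℕ) := by norm_num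
  rw [h1]; linarith

lemma hc_lemma {y : ℝ} (hy0 : 0 < y) :
    2 + 2*(max 0.9 (0.8+y))*(Real.exp (y^2) - 1) ≤ Real.exp ((max 0.9 (0.8+y))^2) := by
  set T := max (0.9:ℝ) (0.8+y) with hTdef
  have hT9 : (0.9:ℝ) ≤ T := by rw [hTdef]; exact le_max_left _ _
  have hK0 : (0:ℝ) ≤ Real.exp (y^2) - 1 := by linarith [Real.one_le_exp (sq_nonneg y)]
  rcases le_or_gt y 0.12 with hy12 | hy12
  · have hTub : T ≤ 0.92 := max_le (by norm_num) (by linarith)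
    have hysq : y^2 ≤ 0.0144 := by nlinarith
    have hKub : Real.exp (y^2) - 1 ≤ 0.0288 := by
      have := exp_ub_lin (sq_nonneg y) (by nlinarith)
      nlinarith
    have h81 : (0.81:ℝ) ≤ T^2 := by nlinarith
    have hmono : Real.exp 0.81 ≤ Real.exp (T^2) := Real.exp_le_exp.mpr h81
    nlinarith [exp_081, mul_le_mul (by linarith : 2*T ≤ 1.84) hKub hK0
      (by norm_num : (0:ℝ) ≤ 1.84)]
  · have hTeq : T = 0.8 + y := max_eq_right (by linarith)
    have hTsq : T^2 = y^2 + 1.6*y + 0.64 := by rw [hTeq]; ring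
    have hsplit : Real.exp (T^2) = Real.exp (y^2) * Real.exp (1.6*y) * Real.exp 0.64 := by
      rw [hTsq, Real.exp_add, Real.exp_add]
    have e16y : 1 + 1.6*y ≤ Real.exp (1.6*y) := by linarith [Real.add_one_le_exp (1.6*y)]
    have eL1 : (1:ℝ) ≤ Real.exp (y^2) := Real.one_le_exp (sq_nonneg y)
    have hEpos : (0:ℝ) ≤ Real.exp (y^2) := by linarith
    have c1 : Real.exp (y^2)*(1+1.6*y)*1.88 ≤ Real.exp (y^2)*Real.exp (1.6*y)*Real.exp 0.64 := by
      have hx1 : Real.exp (y^2)*(1+1.6*y) ≤ Real.exp (y^2)*Real.exp (1.6*y) :=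
        mul_le_mul_of_nonneg_left e16y hEpos
      have hx2 : (0:ℝ) ≤ Real.exp (y^2)*Real.exp (1.6*y) := by positivity
      calc Real.exp (y^2)*(1+1.6*y)*1.88 ≤ Real.exp (y^2)*Real.exp (1.6*y)*1.88 :=
            mul_le_mul_of_nonneg_right hx1 (by norm_num)
        _ ≤ Real.exp (y^2)*Real.exp (1.6*y)*Real.exp 0.64 :=
            mul_le_mul_of_nonneg_left exp_064 hx2
    rw [hsplit, hTeq]
    nlinarith [c1, eL1, hy12, mul_nonneg (by linarith : (0:ℝ) ≤ Real.exp (y^2) - 1)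
      (by linarith : (0:ℝ) ≤ 0.28 + 1.008*y)]

lemma hs_lemma {y : ℝ} (hy0 : 0 < y) :
    (Real.exp (y^2) - 1)*(1 - (max 0.9 (0.8+y))^2) < max 0.9 (0.8+y) := by
  set T := max (0.9:ℝ) (0.8+y) with hTdef
  have hT9 : (0.9:ℝ) ≤ T := by rw [hTdef]; exact le_max_left _ _
  have hK0 : (0:ℝ) ≤ Real.exp (y^2) - 1 := by linarith [Real.one_le_exp (sq_nonneg y)]
  rcases le_or_gt 1 T with h1 | h1
  · nlinarith [mul_nonneg hK0 (by nlinarith : (0:ℝ) ≤ T^2 - 1)]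
  · have hyub : y < 0.2 := by
      by_contra hcon
      push_neg at hcon
      have h3 : (1:ℝ) ≤ T := le_trans (by linarith) (le_max_right (0.9:ℝ) (0.8+y))
      linarith
    have hysq : y^2 ≤ 0.04 := by nlinarith
    have hKub : Real.exp (y^2) - 1 ≤ 0.08 := by
      have := exp_ub_lin (sq_nonneg y) (by nlinarith)
      nlinarith
    have h2 : (0:ℝ) ≤ 1 - T^2 := by nlinarith
    nlinarith [mul_le_mul_of_nonneg_right hKub h2, sq_nonneg T]

lemma ht_lemma {K T : ℝ} (hT9 : 0.9 ≤ T) (hK0 : 0 ≤ K)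
    (HC : 2 + 2*T*K ≤ Real.exp (T^2)) (HS : K*(1-T^2) < T)
    {x : ℝ} (hx : T < x) : 2 + 2*x*K < Real.exp (x^2) := by
  have hx0 : 0 < x := lt_trans (by linarith) hx
  have h1 : Real.exp (T*x) ≤ Real.exp (x^2) := Real.exp_le_exp.mpr (by nlinarith)
  have h2 : Real.exp (T*x) = Real.exp (T^2) * Real.exp (T*(x - T)) := by
    rw [← Real.exp_add]; ring_nf
  have h3 : 1 + T*(x-T) ≤ Real.exp (T*(x-T)) := by linarith [Real.add_one_le_exp (T*(x-T))]
  have h4 : Real.exp (T^2) * (1 + T*(x-T)) ≤ Real.exp (T*x) := by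
    rw [h2]; exact mul_le_mul_of_nonneg_left h3 (Real.exp_pos _).le
  have hfac : (0:ℝ) ≤ 1 + T*(x-T) := by nlinarith
  have h5 : (2 + 2*T*K) * (1 + T*(x-T)) ≤ Real.exp (T^2) * (1 + T*(x-T)) :=
    mul_le_mul_of_nonneg_right HC hfac
  have h6 : 2 + 2*x*K < (2 + 2*T*K) * (1 + T*(x-T)) := by
    nlinarith [mul_pos (by linarith : (0:ℝ) < x - T)
      (by linarith [HS] : (0:ℝ) < T - K*(1-T^2))]
  linarith

lemma num_final {T M A : ℝ} (hT9 : 0.9 ≤ T) (hM1 : 1 ≤ M) (hA1 : 1 ≤ A)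
    (hTA : T ≤ A) (hMdef : M = max (T/4) 1) (hTdef : T = max 0.9 (A - 0.2)) :
    4*T^2 + Real.sqrt (16*T^4+8*M*T^2+64*T^2) + M + 1 ≤ 15*A^2 := by
  have hT0 : (0:ℝ) < T := by linarith
  rcases le_or_gt T 4 with hT4 | hT4
  · have hMeq : M = 1 := by rw [hMdef]; exact max_eq_right (by linarith)
    rcases le_or_gt A 1.1 with hA11 | hA11
    · have hTeq : T = 0.9 := by rw [hTdef]; exact max_eq_left (by linarith)
      rw [hMeq, hTeq]
      have hs : Real.sqrt (16*(0.9:ℝ)^4+8*1*0.9^2+64*0.9^2) ≤ 8.3 := by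
        apply sqrt_le_of_sq_ge (by norm_num)
        norm_num
      nlinarith [hs, hA1, sq_nonneg (A-1)]
    · have hTeq : T = A - 0.2 := by rw [hTdef]; exact max_eq_right (by linarith)
      have hs : Real.sqrt (16*T^4+8*M*T^2+64*T^2) ≤ 4*T^2 + 9 := by
        apply sqrt_le_of_sq_ge (by nlinarith [sq_nonneg T])
        rw [hMeq]; nlinarith [sq_nonneg T]
      rw [hMeq] at hs ⊢
      nlinarith [hs, hA11, hTeq, sq_nonneg (A - 1.1)]
  · have hMeq : M = T/4 := by rw [hMdef]; exact max_eq_left (by linarith)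
    have hs : Real.sqrt (16*T^4+8*M*T^2+64*T^2) ≤ 4*T^2 + T/4 + 8 := by
      apply sqrt_le_of_sq_ge (by nlinarith [sq_nonneg T])
      rw [hMeq]; nlinarith [sq_nonneg T, hT0.le]
    rw [hMeq] at hs ⊢
    nlinarith [hs, hT4, hTA, hA1, mul_le_mul hTA hTA hT0.le (by linarith)]

end NumericLemmas

lemma sub_sign1 {fa fb g R : ℝ} (h2 : fb + g*(R - 0) ≤ fa) (h3 : fa ≤ fb) (hR : 0 < R) :
    g ≤ 0 := by nlinarith

lemma sub_sign2 {fr fs g R rr : ℝ} (h2 : fr + g*(R - rr) ≤ fs) (h3 : fs ≤ fr) (h4 : R < rr) :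
    0 ≤ g := by nlinarith

set_option maxHeartbeats 1600000 in
/-- If the optimal radii are bounded by `D` (unknown to the algorithm), then
`A_CP` guarantees `|S*_t| ≤ 2√(V*_{t,clip})(1+√log(1+2D/ε)) + 15·G*_t·(1+√log(1+2D/ε))²`. -/
theorem ocp_coverage_bound_domain
    (eps : ℝ) (heps : 0 < eps)
    (lam : ℕ → ℝ) (hlam : ∀ t, 0 < lam t) (hlam0 : lam 0 = 1)
    (f : ℕ → ℝ → ℝ) (rstar : ℕ → ℝ)
    (Sc Vc Gs rt r gs gclip : ℕ → ℝ)
    (hSc0 : Sc 0 = 0) (hVc0 : Vc 0 = 0) (hGs0 : Gs 0 = 0)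
    (hrt : ∀ t, 1 ≤ t →
      (Gs (t-1) = 0 → rt t = 0) ∧
      (Gs (t-1) ≠ 0 → rt t =
        eps * erfi (Sc (t-1) /
          (2 * Real.sqrt (Vc (t-1) + 2 * Gs (t-1) * Sc (t-1) + 16 * (Gs (t-1))^2)))
        - eps * Gs (t-1) / Real.sqrt (Vc (t-1) + 2 * Gs (t-1) * Sc (t-1) + 16 * (Gs (t-1))^2)
          * Real.exp ((Sc (t-1))^2 /
            (4 * (Vc (t-1) + 2 * Gs (t-1) * Sc (t-1) + 16 * (Gs (t-1))^2)))))
    (hr : ∀ t, 1 ≤ t → r t = max (rt t) 0)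
    (hfconv : ∀ t, ConvexOn ℝ (Set.Ici 0) (f t))
    (hrstar : ∀ t, 0 ≤ rstar t)
    (hmin : ∀ t, ∀ y ∈ Set.Ici (0:ℝ), f t (rstar t) ≤ f t y)
    (hsub : ∀ t, 1 ≤ t → ∀ y ∈ Set.Ici (0:ℝ), f t (r t) + gs t * (y - r t) ≤ f t y)
    (hneg : ∀ t, 1 ≤ t → r t = rstar t → gs t ≤ 0)
    (hclip : ∀ t, 1 ≤ t →
      gclip t = max (-(lam (t-1) * Gs (t-1))) (min (gs t) (lam (t-1) * Gs (t-1))))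
    (hScrec : ∀ t, 1 ≤ t → Sc t = lam (t-1) * Sc (t-1) - gclip t)
    (hVcrec : ∀ t, 1 ≤ t → Vc t = (lam (t-1))^2 * Vc (t-1) + (gclip t)^2)
    (hGsrec : ∀ t, 1 ≤ t → Gs t = max (lam (t-1) * Gs (t-1)) |gs t|)
    (Sstar : ℕ → ℝ)
    (hSstar : ∀ t, Sstar t = -∑ i ∈ Finset.Icc 1 t, (∏ j ∈ Finset.Icc i (t-1), lam j) * gs i)
    (D : ℝ) (hD : 0 < D) (hrstarD : ∀ t, rstar t ≤ D) :
    ∀ t, 1 ≤ t →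
      |Sstar t| ≤ 2 * Real.sqrt (Vc t)
          * (1 + Real.sqrt (Real.log (1 + 2 * D * eps⁻¹)))
        + 15 * Gs t * (1 + Real.sqrt (Real.log (1 + 2 * D * eps⁻¹)))^2 := by
  obtain ⟨y, hydef⟩ : ∃ z, z = Real.sqrt (Real.log (1 + 2 * D * eps⁻¹)) := ⟨_, rfl⟩
  obtain ⟨A, hAdef⟩ : ∃ z, z = 1 + y := ⟨_, rfl⟩
  obtain ⟨T, hTdef⟩ : ∃ z, z = max (0.9:ℝ) (A - 0.2) := ⟨_, rfl⟩
  obtain ⟨M, hMdef⟩ : ∃ z, z = max (T/4) (1:ℝ) := ⟨_, rfl⟩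
  rw [show (∀ t, 1 ≤ t →
      |Sstar t| ≤ 2 * Real.sqrt (Vc t)
          * (1 + Real.sqrt (Real.log (1 + 2 * D * eps⁻¹)))
        + 15 * Gs t * (1 + Real.sqrt (Real.log (1 + 2 * D * eps⁻¹)))^2) =
      (∀ t, 1 ≤ t → |Sstar t| ≤ 2 * Real.sqrt (Vc t) * A + 15 * Gs t * A^2) by
    rw [hAdef, hydef]]
  have hKpos : (0:ℝ) < 2*D*eps⁻¹ := by positivity
  have hK0 : (0:ℝ) ≤ 2*D*eps⁻¹ := hKpos.le
  have hLpos : 0 < Real.log (1 + 2*D*eps⁻¹) := Real.log_pos (by linarith only [hKpos])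
  have hy0 : 0 < y := by rw [hydef]; exact Real.sqrt_pos.mpr hLpos
  have hy2 : y^2 = Real.log (1+2*D*eps⁻¹) := by rw [hydef]; exact Real.sq_sqrt hLpos.le
  have hexpL : Real.exp (y^2) = 1 + 2*D*eps⁻¹ := by
    rw [hy2]; exact Real.exp_log (by linarith only [hKpos])
  have hA1 : 1 ≤ A := by rw [hAdef]; linarith only [hy0]
  have hT9 : (0.9:ℝ) ≤ T := by rw [hTdef]; exact le_max_left _ _
  have hT0 : (0:ℝ) < T := by linarith only [hT9]
  have hTA : T ≤ A := by
    rw [hTdef]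
    exact max_le (by linarith only [hA1]) (by linarith only [])
  have hM1 : (1:ℝ) ≤ M := by rw [hMdef]; exact le_max_right _ _
  have hMT : T/4 ≤ M := by rw [hMdef]; exact le_max_left _ _
  have hM0 : (0:ℝ) < M := by linarith only [hM1]
  have hKL : 2*D*eps⁻¹ = Real.exp (y^2) - 1 := by rw [hexpL]; ring
  have hT08 : T = max 0.9 (0.8+y) := by
    rw [hTdef]; congr 1; rw [hAdef]; ring
  have HC : 2 + 2*T*(2*D*eps⁻¹) ≤ Real.exp (T^2) := by
    rw [hKL, hT08]; exact hc_lemma hy0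
  have HS : (2*D*eps⁻¹)*(1 - T^2) < T := by
    rw [hKL, hT08]; exact hs_lemma hy0
  have HT : ∀ x : ℝ, T < x → 2 + 2*x*(2*D*eps⁻¹) < Real.exp (x^2) :=
    fun x hx => ht_lemma hT9 hK0 HC HS hx
  -- Sstar recursion
  have hSstar0 : Sstar 0 = 0 := by rw [hSstar]; simp
  have hSrec : ∀ t : ℕ, Sstar (t+1) = lam t * Sstar t - gs (t+1) := by
    intro t
    rw [hSstar, hSstar]
    cases t with
    | zero => simp
    | succ s =>
      have h1 : ∑ i ∈ Finset.Icc 1 (s+1+1), (∏ j ∈ Finset.Icc i (s+1+1-1), lam j) * gs i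
          = (∑ i ∈ Finset.Icc 1 (s+1), (∏ j ∈ Finset.Icc i (s+1), lam j) * gs i)
            + (∏ j ∈ Finset.Icc (s+1+1) (s+1), lam j) * gs (s+1+1) := by
        simp only [Nat.add_sub_cancel]
        exact Finset.sum_Icc_succ_top (by omega) _
      have h2 : Finset.Icc (s+1+1) (s+1) = ∅ := Finset.Icc_eq_empty (by omega)
      have h3 : ∀ i ∈ Finset.Icc 1 (s+1), (∏ j ∈ Finset.Icc i (s+1), lam j) * gs i
          = lam (s+1) * ((∏ j ∈ Finset.Icc i s, lam j) * gs i) := by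
        intro i hi
        rw [Finset.prod_Icc_succ_top (Finset.mem_Icc.mp hi).2]
        ring
      rw [h1, h2, Finset.sum_congr rfl h3, ← Finset.mul_sum]
      simp only [Finset.prod_empty, Nat.add_sub_cancel]
      ring
  clear hfconv hlam0 hSstar hy2 hexpL hLpos hKpos hKL
  -- main invariant
  have Inv : ∀ t : ℕ, 0 ≤ Gs t ∧ 0 ≤ Vc t ∧ (Gs t = 0 → Sc t = 0 ∧ Vc t = 0) ∧
      -Gs t ≤ Sc t ∧
      Sc t ≤ 2*T*Real.sqrt (Vc t + 2*Gs t*Sc t + 16*(Gs t)^2) + M*Gs t ∧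
      |Sstar t - Sc t| ≤ Gs t := by
    intro t
    induction t with
    | zero =>
      refine ⟨le_of_eq hGs0.symm, le_of_eq hVc0.symm, fun _ => ⟨hSc0, hVc0⟩, ?_, ?_, ?_⟩
      · rw [hSc0, hGs0]; norm_num
      · rw [hSc0, hGs0, hVc0]
        norm_num [Real.sqrt_zero]
      · rw [hSstar0, hSc0, hGs0]; norm_num
    | succ t ih =>
      obtain ⟨hg0, hv0, hzero, hlow, hup, hdif⟩ := ih
      obtain ⟨W0, hW0def⟩ : ∃ z, z = Vc t + 2*Gs t*Sc t + 16*(Gs t)^2 := ⟨_, rfl⟩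
      obtain ⟨W1, hW1def⟩ : ∃ z, z = Vc (t+1) + 2*Gs (t+1)*Sc (t+1) + 16*(Gs (t+1))^2 := ⟨_, rfl⟩
      rw [← hW0def] at hup
      have hl : 0 < lam t := hlam t
      have hrec1 : Sc (t+1) = lam t * Sc t - gclip (t+1) := by
        have := hScrec (t+1) (by omega); simpa using this
      have hrec2 : Vc (t+1) = (lam t)^2 * Vc t + (gclip (t+1))^2 := by
        have := hVcrec (t+1) (by omega); simpa using this
      have hrec3 : Gs (t+1) = max (lam t * Gs t) |gs (t+1)| := by
        have := hGsrec (t+1) (by omega); simpa using this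
      have hrecc : gclip (t+1) = max (-(lam t * Gs t)) (min (gs (t+1)) (lam t * Gs t)) := by
        have := hclip (t+1) (by omega); simpa using this
      have hlg : 0 ≤ lam t * Gs t := mul_nonneg hl.le hg0
      have hgcub : gclip (t+1) ≤ lam t * Gs t := by
        rw [hrecc]; exact max_le (by linarith only [hlg]) (min_le_right _ _)
      have hgclb : -(lam t * Gs t) ≤ gclip (t+1) := by rw [hrecc]; exact le_max_left _ _
      have hG1 : lam t * Gs t ≤ Gs (t+1) := by rw [hrec3]; exact le_max_left _ _
      have hG1' : 0 ≤ Gs (t+1) := le_trans hlg hG1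
      have hGabs : |gs (t+1)| ≤ Gs (t+1) := by rw [hrec3]; exact le_max_right _ _
      have hV1 : 0 ≤ Vc (t+1) := by rw [hrec2]; positivity
      -- sign of gs when Sc t < 0
      have hGSneg : Sc t < 0 → gs (t+1) ≤ 0 := by
        intro hs
        have hg0p : 0 < Gs t := by
          rcases eq_or_lt_of_le hg0 with h | h
          · exfalso; obtain ⟨hs0, _⟩ := hzero h.symm; rw [hs0] at hs; exact lt_irrefl _ hs
          · exact h
        have hW0p : 0 < W0 := by
          rw [hW0def]
          nlinarith only [hv0, mul_nonneg hg0 (by linarith only [hlow] : (0:ℝ) ≤ Sc t + Gs t), hg0p]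
        have hq : 0 < Real.sqrt W0 := Real.sqrt_pos.mpr hW0p
        have hrtv := (hrt (t+1) (by omega)).2
        simp only [Nat.add_sub_cancel] at hrtv
        have hrtval := hrtv (ne_of_gt hg0p)
        rw [← hW0def] at hrtval
        have hxneg : Sc t/(2*Real.sqrt W0) ≤ 0 :=
          div_nonpos_of_nonpos_of_nonneg hs.le (by linarith only [hq])
        have herfineg := erfi_nonpos hxneg
        have hterm2 : 0 < eps * Gs t / Real.sqrt W0 * Real.exp ((Sc t)^2/(4*W0)) :=
          mul_pos (div_pos (mul_pos heps hg0p) hq) (Real.exp_pos _)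
        have hrt0 : rt (t+1) ≤ 0 := by
          rw [hrtval]
          have h1 : eps * erfi (Sc t/(2*Real.sqrt W0)) ≤ 0 :=
            mul_nonpos_of_nonneg_of_nonpos heps.le herfineg
          linarith only [h1, hterm2]
        have hr0 : r (t+1) = 0 := by
          rw [hr (t+1) (by omega)]; exact max_eq_right hrt0
        by_cases he : r (t+1) = rstar (t+1)
        · exact hneg (t+1) (by omega) he
        · have hrs : 0 < rstar (t+1) := by
            rcases eq_or_lt_of_le (hrstar (t+1)) with h | h
            · exfalso; exact he (by rw [hr0, ← h])
            · exact h
          have h2 := hsub (t+1) (by omega) (rstar (t+1)) (hrstar (t+1))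
          have h3 := hmin (t+1) (r (t+1)) (Set.mem_Ici.mpr (by rw [hr0]))
          rw [hr0] at h2 h3
          exact sub_sign1 h2 h3 hrs
      -- sign of gs when Sc t is large
      have hGSpos : 2*T*Real.sqrt W0 < Sc t → 0 ≤ gs (t+1) := by
        intro hcase
        have hsq0 : (0:ℝ) ≤ Real.sqrt W0 := Real.sqrt_nonneg _
        have hst0 : 0 < Sc t :=
          lt_of_le_of_lt (mul_nonneg (by linarith only [hT0]) hsq0) hcase
        have hg0p : 0 < Gs t := by
          rcases eq_or_lt_of_le hg0 with h | h
          · exfalso; obtain ⟨hs0, _⟩ := hzero h.symm; rw [hs0] at hst0; exact lt_irrefl _ hst0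
          · exact h
        have hW0p : 0 < W0 := by rw [hW0def]; nlinarith only [hv0, hst0, hg0p]
        have hq : 0 < Real.sqrt W0 := Real.sqrt_pos.mpr hW0p
        have hq2 : Real.sqrt W0 ^ 2 = W0 := Real.sq_sqrt hW0p.le
        have hrtv := (hrt (t+1) (by omega)).2
        simp only [Nat.add_sub_cancel] at hrtv
        have hrtval := hrtv (ne_of_gt hg0p)
        rw [← hW0def] at hrtval
        obtain ⟨x, hxdef⟩ : ∃ z, z = Sc t / (2*Real.sqrt W0) := ⟨_, rfl⟩
        have hx : T < x := by
          rw [hxdef, lt_div_iff₀ (by linarith only [hq] : (0:ℝ) < 2*Real.sqrt W0)]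
          linarith only [hcase]
        have hx0 : 0 < x := by linarith only [hx, hT0]
        rw [← hxdef] at hrtval
        have hxsq : (Sc t)^2/(4*W0) = x^2 := by
          rw [hxdef, div_pow, mul_pow, hq2]
          norm_num
        rw [hxsq] at hrtval
        have herfi := erfi_lower hx0
        have hW0ge : 2*Gs t*Sc t ≤ W0 := by
          rw [hW0def]; linarith only [hv0, sq_nonneg (Gs t)]
        have h0 : (1:ℝ)/(4*x) = Real.sqrt W0/(2*Sc t) := by
          rw [hxdef]; field_simp; ring
        have h1 : Gs t / Real.sqrt W0 ≤ 1/(4*x) := by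
          rw [h0, div_le_div_iff₀ hq (by linarith only [hst0] : (0:ℝ) < 2*Sc t)]
          nlinarith only [hW0ge, hq2]
        have hkbd : eps * Gs t / Real.sqrt W0 * Real.exp (x^2) ≤ eps * (Real.exp (x^2)/(4*x)) := by
          have h2 : Gs t / Real.sqrt W0 * Real.exp (x^2) ≤ 1/(4*x) * Real.exp (x^2) :=
            mul_le_mul_of_nonneg_right h1 (Real.exp_pos _).le
          calc eps * Gs t / Real.sqrt W0 * Real.exp (x^2)
              = eps * (Gs t / Real.sqrt W0 * Real.exp (x^2)) := by ring
            _ ≤ eps * (1/(4*x) * Real.exp (x^2)) := mul_le_mul_of_nonneg_left h2 heps.le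
            _ = eps * (Real.exp (x^2)/(4*x)) := by ring
        have hrtlb : eps * ((Real.exp (x^2) - 1)/(2*x)) - eps*(Real.exp (x^2)/(4*x)) ≤ rt (t+1) := by
          rw [hrtval]
          have h2 := mul_le_mul_of_nonneg_left herfi heps.le
          linarith only [hkbd, h2]
        have hE := HT x hx
        have h4x : (0:ℝ) < 4*x := by linarith only [hx0]
        have h5 : eps * (2 + 2*x*(2*D*eps⁻¹)) = 2*eps + (4*x)*D := by
          field_simp; ring
        have h6 : 2*eps + (4*x)*D < eps * Real.exp (x^2) := by
          rw [← h5]; exact (mul_lt_mul_iff_right₀ heps).mpr hE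
        have h7 : eps * ((Real.exp (x^2) - 1)/(2*x)) - eps*(Real.exp (x^2)/(4*x))
            = (eps*Real.exp (x^2) - 2*eps)/(4*x) := by
          field_simp
          ring
        have h8 : D < (eps*Real.exp (x^2) - 2*eps)/(4*x) := by
          rw [lt_div_iff₀ h4x]; linarith only [h6]
        rw [h7] at hrtlb
        have hrtD : D < rt (t+1) := lt_of_lt_of_le h8 hrtlb
        have hrD : D < r (t+1) := by
          rw [hr (t+1) (by omega)]
          exact lt_of_lt_of_le hrtD (le_max_left _ _)
        have h2 := hsub (t+1) (by omega) (rstar (t+1)) (hrstar (t+1))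
        have h3 := hmin (t+1) (r (t+1))
          (Set.mem_Ici.mpr (by rw [hr (t+1) (by omega)]; exact le_max_right _ _))
        have h4 : rstar (t+1) < r (t+1) := lt_of_le_of_lt (hrstarD (t+1)) hrD
        exact sub_sign2 h2 h3 h4
      have hSr : Sstar (t+1) = lam t * Sstar t - gs (t+1) := hSrec t
      clear hrt hr hmin hsub hneg hclip hScrec hVcrec hGsrec hlam hrstar hrstarD HT HC HS
      -- zero propagation
      have hz1 : Gs (t+1) = 0 → Sc (t+1) = 0 ∧ Vc (t+1) = 0 := by
        intro h
        have hg00 : Gs t = 0 := by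
          by_contra hne
          have hgp : 0 < Gs t := lt_of_le_of_ne hg0 (Ne.symm hne)
          have h2 : 0 < lam t * Gs t := mul_pos hl hgp
          have h3 := hG1
          rw [h] at h3
          linarith only [h2, h3]
        have hgc00 : gclip (t+1) = 0 := by
          have h1 := hgcub; have h2 := hgclb
          rw [hg00, mul_zero] at h1 h2
          rw [neg_zero] at h2
          linarith only [h1, h2]
        obtain ⟨hs0, hv00⟩ := hzero hg00
        constructor
        · rw [hrec1, hs0, hgc00]; ring
        · rw [hrec2, hv00, hgc00]; ring
      -- lower bound
      have hlow' : -Gs (t+1) ≤ Sc (t+1) := by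
        rcases le_or_gt 0 (Sc t) with hs | hs
        · rw [hrec1]
          have h2 := mul_nonneg hl.le hs
          linarith only [hgcub, hG1, h2]
        · have hgs := hGSneg hs
          have hgcle : gclip (t+1) ≤ 0 := by
            rw [hrecc]
            exact max_le (by linarith only [hlg]) (le_trans (min_le_left _ _) hgs)
          rw [hrec1]
          have h2 := mul_le_mul_of_nonneg_left hlow hl.le
          have h3 : lam t * -Gs t = -(lam t * Gs t) := by ring
          rw [h3] at h2
          linarith only [hG1, h2, hgcle]
      -- upper bound
      have hup' : Sc (t+1) ≤ 2*T*Real.sqrt W1 + M*Gs (t+1) := by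
        rcases le_or_gt (Sc (t+1)) 0 with hs' | hs'
        · have h1 : (0:ℝ) ≤ Real.sqrt W1 := Real.sqrt_nonneg _
          have h2 : (0:ℝ) ≤ 2*T*Real.sqrt W1 := mul_nonneg (by linarith only [hT0]) h1
          have h3 : (0:ℝ) ≤ M*Gs (t+1) := mul_nonneg (by linarith only [hM1]) hG1'
          linarith only [hs', h2, h3]
        · have e1 : lam t*Gs t*Sc (t+1) ≤ Gs (t+1)*Sc (t+1) :=
            mul_le_mul_of_nonneg_right hG1 hs'.le
          have e2 : (lam t*Gs t)^2 ≤ (Gs (t+1))^2 := by nlinarith only [hG1, hlg]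
          have hKW : (lam t)^2*W0 + (gclip (t+1))^2 - 2*(lam t*Gs t)*gclip (t+1) ≤ W1 := by
            rw [hW1def, hW0def, hrec2, hrec1]
            rw [hrec1] at e1
            nlinarith only [e1, e2]
          rcases le_or_gt (Sc t) (2*T*Real.sqrt W0) with hcase | hcase
          · -- case B
            rcases le_or_gt (gclip (t+1)) 0 with hgc | hgc
            · have hWge : (lam t)^2*W0 ≤ W1 := by
                nlinarith only [hKW, mul_nonneg hlg (neg_nonneg.mpr hgc), sq_nonneg (gclip (t+1))]
              have hlq : lam t * Real.sqrt W0 ≤ Real.sqrt W1 := by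
                have h1 : Real.sqrt ((lam t)^2*W0) ≤ Real.sqrt W1 := Real.sqrt_le_sqrt hWge
                rwa [Real.sqrt_mul (sq_nonneg _), Real.sqrt_sq hl.le] at h1
              rw [hrec1]
              have h9 : lam t*Sc t ≤ lam t*(2*T*Real.sqrt W0) :=
                mul_le_mul_of_nonneg_left hcase hl.le
              have h10 := mul_le_mul_of_nonneg_left hlq (by linarith only [hT0] : (0:ℝ) ≤ 2*T)
              have h11 : -gclip (t+1) ≤ Gs (t+1) := le_trans (by linarith only [hgclb, hlg]) hG1
              have h12 : (0:ℝ) ≤ (M-1)*Gs (t+1) := mul_nonneg (by linarith only [hM1]) hG1'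
              linarith only [h9, h10, h11, h12]
            · have hq'0 : (0:ℝ) ≤ W1 := by
                rw [hW1def]
                linarith only [hV1, mul_nonneg hG1' hs'.le, sq_nonneg (Gs (t+1))]
              have hq'2 : Real.sqrt W1 ^ 2 = W1 := Real.sq_sqrt hq'0
              have hq'4 : 4*(lam t*Gs t) ≤ Real.sqrt W1 := by
                apply Real.le_sqrt_of_sq_le
                rw [hW1def]
                nlinarith only [hV1, mul_nonneg hG1' hs'.le, e2]
              have hWge : (lam t)^2*W0 ≤ W1 + (lam t*Gs t)^2 := by
                nlinarith only [hKW, sq_nonneg (gclip (t+1) - lam t*Gs t)]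
              have hq2 : Real.sqrt W0 ^ 2 = W0 := Real.sq_sqrt (by
                rw [hW0def]
                nlinarith only [hv0,
                  mul_nonneg hg0 (by linarith only [hlow] : (0:ℝ) ≤ Sc t + Gs t)])
              have hq2' : (lam t*Real.sqrt W0)^2 = (lam t)^2*W0 := by
                rw [mul_pow, hq2]
              have h13 := mul_le_mul_of_nonneg_right hq'4 hlg
              have hlq : lam t * Real.sqrt W0 ≤ Real.sqrt W1 + lam t*Gs t/8 := by
                apply le_of_sq_le' (add_nonneg (Real.sqrt_nonneg _) (by linarith only [hlg]))
                nlinarith only [hWge, hq2', hq'2, h13]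
              rw [hrec1]
              have h9 : lam t*Sc t ≤ lam t*(2*T*Real.sqrt W0) :=
                mul_le_mul_of_nonneg_left hcase hl.le
              have h10 := mul_le_mul_of_nonneg_left hlq (by linarith only [hT0] : (0:ℝ) ≤ 2*T)
              have h11 : T/4*(lam t*Gs t) ≤ M*(lam t*Gs t) := mul_le_mul_of_nonneg_right hMT hlg
              have h12 : M*(lam t*Gs t) ≤ M*Gs (t+1) :=
                mul_le_mul_of_nonneg_left hG1 (by linarith only [hM1])
              linarith only [h9, h10, h11, h12, hgc.le]
          · -- case A
            have hsq0 : (0:ℝ) ≤ Real.sqrt W0 := Real.sqrt_nonneg _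
            have hst0 : 0 < Sc t :=
              lt_of_le_of_lt (mul_nonneg (by linarith only [hT0]) hsq0) hcase
            have hg0p : 0 < Gs t := by
              rcases eq_or_lt_of_le hg0 with h | h
              · exfalso; obtain ⟨hs0, _⟩ := hzero h.symm; rw [hs0] at hst0; exact lt_irrefl _ hst0
              · exact h
            have hW0p : 0 < W0 := by rw [hW0def]; nlinarith only [hv0, hst0, hg0p]
            have hq : 0 < Real.sqrt W0 := Real.sqrt_pos.mpr hW0p
            have hq2 : Real.sqrt W0 ^ 2 = W0 := Real.sq_sqrt hW0p.le
            have hW0ge : 2*Gs t*Sc t ≤ W0 := by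
              rw [hW0def]; linarith only [hv0, sq_nonneg (Gs t)]
            have hq4 : 4*T*Gs t < Real.sqrt W0 := by
              nlinarith only [hW0ge, hq2, mul_lt_mul_of_pos_left hcase hg0p, hq, hg0p, hT0]
            have hgs := hGSpos hcase
            have hgc0 : 0 ≤ gclip (t+1) := by
              rw [hrecc]
              exact le_trans (le_min hgs hlg) (le_max_right _ _)
            have h13a : (4*T*lam t)*(4*T*Gs t) ≤ (4*T*lam t)*Real.sqrt W0 :=
              mul_le_mul_of_nonneg_left hq4.le
                (mul_nonneg (by linarith only [hT0] : (0:ℝ) ≤ 4*T) hl.le)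
            have h13 : 8*T^2*(lam t)*Gs t ≤ 4*T*(lam t)*Real.sqrt W0 := by
              nlinarith only [h13a, mul_nonneg hT0.le (mul_nonneg (mul_nonneg hT0.le hl.le) hg0)]
            have h14 := mul_le_mul_of_nonneg_right h13 hgc0
            have h15 : (0:ℝ) ≤ (4*T^2 - 1)*(gclip (t+1))^2 :=
              mul_nonneg (by nlinarith only [hT9] : (0:ℝ) ≤ 4*T^2-1) (sq_nonneg _)
            have hq2'' : (2*T*(lam t*Real.sqrt W0))^2 = 4*T^2*((lam t)^2*W0) := by
              rw [mul_pow, mul_pow, mul_pow, hq2]; ring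
            have hY0 : (2*T*(lam t*Real.sqrt W0) - gclip (t+1))^2
                ≤ (2*T)^2 * ((lam t)^2*W0 - 2*(lam t*Gs t)*gclip (t+1) + (gclip (t+1))^2) := by
              nlinarith only [h14, h15, hq2'']
            have hstep1 : 2*T*(lam t*Real.sqrt W0) - gclip (t+1)
                ≤ 2*T*Real.sqrt ((lam t)^2*W0 - 2*(lam t*Gs t)*gclip (t+1) + (gclip (t+1))^2) := by
              have h1 := Real.le_sqrt_of_sq_le hY0
              rwa [Real.sqrt_mul (sq_nonneg _), Real.sqrt_sq (by linarith only [hT0] : (0:ℝ) ≤ 2*T)] at h1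
            have hstep2 : Real.sqrt ((lam t)^2*W0 - 2*(lam t*Gs t)*gclip (t+1) + (gclip (t+1))^2)
                ≤ Real.sqrt W1 := Real.sqrt_le_sqrt (by linarith only [hKW])
            have hstep2' := mul_le_mul_of_nonneg_left hstep2 (by linarith only [hT0] : (0:ℝ) ≤ 2*T)
            rw [hrec1]
            have h9 : lam t * Sc t ≤ lam t * (2*T*Real.sqrt W0 + M*Gs t) :=
              mul_le_mul_of_nonneg_left hup hl.le
            have h10 : M*(lam t*Gs t) ≤ M*Gs (t+1) :=
              mul_le_mul_of_nonneg_left hG1 (by linarith only [hM1])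
            nlinarith only [hstep1, hstep2', h9, h10]
      -- difference bound
      have habs : |gs (t+1) - gclip (t+1)| ≤ Gs (t+1) - lam t*Gs t := by
        rw [hrecc]
        rcases le_total (gs (t+1)) (lam t*Gs t) with h | h
        · rcases le_total (-(lam t*Gs t)) (gs (t+1)) with h2 | h2
          · rw [min_eq_left h, max_eq_right h2]
            simp only [sub_self, abs_zero]
            linarith only [hG1]
          · rw [min_eq_left h, max_eq_left h2]
            rw [abs_of_nonpos (by linarith only [h2])]
            have h3 := neg_abs_le (gs (t+1))
            linarith only [hGabs, h3]
        · rw [min_eq_right h, max_eq_right (by linarith only [hlg] : -(lam t*Gs t) ≤ lam t*Gs t)]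
          rw [abs_of_nonneg (by linarith only [h])]
          have h3 := le_abs_self (gs (t+1))
          linarith only [hGabs, h3]
      have hdif' : |Sstar (t+1) - Sc (t+1)| ≤ Gs (t+1) := by
        have hid : Sstar (t+1) - Sc (t+1)
            = lam t*(Sstar t - Sc t) + -(gs (t+1) - gclip (t+1)) := by
          rw [hSr, hrec1]; ring
        rw [hid]
        calc |lam t*(Sstar t - Sc t) + -(gs (t+1) - gclip (t+1))|
            ≤ |lam t*(Sstar t - Sc t)| + |-(gs (t+1) - gclip (t+1))| := abs_add_le _ _
          _ = lam t*|Sstar t - Sc t| + |gs (t+1) - gclip (t+1)| := by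
              rw [abs_neg, abs_mul, abs_of_pos hl]
          _ ≤ lam t*Gs t + (Gs (t+1) - lam t*Gs t) := by
              have h2 := mul_le_mul_of_nonneg_left hdif hl.le
              linarith only [habs, h2]
          _ = Gs (t+1) := by ring
      rw [hW1def] at hup'
      exact ⟨hG1', hV1, hz1, hlow', hup', hdif'⟩
  -- conclusion
  intro t ht
  obtain ⟨hg0, hv0, hzero, hlow, hup, hdif⟩ := Inv t
  have hd := abs_le.mp hdif
  have hsv : (0:ℝ) ≤ Real.sqrt (Vc t) := Real.sqrt_nonneg _
  have hA2 : 1 ≤ A^2 := by nlinarith only [hA1]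
  rw [abs_le]
  constructor
  · have h1 : (0:ℝ) ≤ 2*Real.sqrt (Vc t)*A :=
      mul_nonneg (by linarith only [hsv]) (by linarith only [hA1])
    have h2 : (0:ℝ) ≤ Gs t*(A^2-1) := mul_nonneg hg0 (by linarith only [hA2])
    linarith only [hd.1, hlow, hg0, h1, h2]
  · have hub : Sstar t ≤ Sc t + Gs t := by linarith only [hd.2]
    rcases le_or_gt (Sc t) (M*Gs t) with hcs | hcs
    · have hMA : M ≤ A^2 := by
        rw [hMdef]
        apply max_le
        · nlinarith only [hTA, hA1, hT0, sq_nonneg (A-1)]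
        · exact hA2
      have h1 : (0:ℝ) ≤ 2*Real.sqrt (Vc t)*A :=
        mul_nonneg (by linarith only [hsv]) (by linarith only [hA1])
      have h2 : M*Gs t ≤ A^2*Gs t := mul_le_mul_of_nonneg_right hMA hg0
      have h3 : 1*Gs t ≤ A^2*Gs t := mul_le_mul_of_nonneg_right hA2 hg0
      have h4 : (0:ℝ) ≤ A^2*Gs t := mul_nonneg (by linarith only [hA2]) hg0
      linarith only [hub, hcs, h1, h2, h3, h4]
    · have hs0 : (0:ℝ) ≤ Sc t := le_trans (mul_nonneg hM0.le hg0) hcs.le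
      have hXnn : (0:ℝ) ≤ Vc t + 2*Gs t*Sc t + 16*(Gs t)^2 := by
        linarith only [hv0, mul_nonneg hg0 hs0, sq_nonneg (Gs t)]
      have hs2 := Real.sq_sqrt hXnn
      have hs2' : 4*T^2*(Real.sqrt (Vc t + 2*Gs t*Sc t + 16*(Gs t)^2))^2
          = 4*T^2*(Vc t + 2*Gs t*Sc t + 16*(Gs t)^2) := by rw [hs2]
      have h1 : Sc t - M*Gs t ≤ 2*T*Real.sqrt (Vc t + 2*Gs t*Sc t + 16*(Gs t)^2) := by
        linarith only [hup]
      have hu0 : 0 < Sc t - M*Gs t := by linarith only [hcs]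
      have h2 : (Sc t - M*Gs t)^2 ≤ 4*T^2*(Vc t + 2*Gs t*Sc t + 16*(Gs t)^2) := by
        nlinarith only [mul_self_le_mul_self hu0.le h1, hs2']
      have h3 : (Sc t - M*Gs t - 4*T^2*Gs t)^2
          ≤ 4*T^2*Vc t + (16*T^4+8*M*T^2+64*T^2)*(Gs t)^2 := by
        nlinarith only [h2]
      have h4 := Real.le_sqrt_of_sq_le h3
      have hQ0 : (0:ℝ) ≤ 16*T^4+8*M*T^2+64*T^2 := by
        have := sq_nonneg T
        nlinarith only [sq_nonneg T, sq_nonneg (T^2), hM1]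
      have h5 : Real.sqrt (4*T^2*Vc t + (16*T^4+8*M*T^2+64*T^2)*(Gs t)^2)
          ≤ 2*T*Real.sqrt (Vc t) + Real.sqrt (16*T^4+8*M*T^2+64*T^2)*Gs t := by
        have hP : (0:ℝ) ≤ 4*T^2*Vc t := mul_nonneg (by nlinarith only [sq_nonneg T]) hv0
        have hQ : (0:ℝ) ≤ (16*T^4+8*M*T^2+64*T^2)*(Gs t)^2 := mul_nonneg hQ0 (sq_nonneg _)
        calc Real.sqrt (4*T^2*Vc t + (16*T^4+8*M*T^2+64*T^2)*(Gs t)^2)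
            ≤ Real.sqrt (4*T^2*Vc t) + Real.sqrt ((16*T^4+8*M*T^2+64*T^2)*(Gs t)^2) :=
              sqrt_add_le' hP hQ
          _ = 2*T*Real.sqrt (Vc t) + Real.sqrt (16*T^4+8*M*T^2+64*T^2)*Gs t := by
              rw [show (4*T^2*Vc t) = (2*T)^2*Vc t by ring,
                Real.sqrt_mul (sq_nonneg _), Real.sqrt_sq (by linarith only [hT0] : (0:ℝ) ≤ 2*T),
                Real.sqrt_mul hQ0, Real.sqrt_sq hg0]
      have hnum := num_final hT9 hM1 hA1 hTA hMdef hTdef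
      have hnum' := mul_le_mul_of_nonneg_right hnum hg0
      have hTle : 2*T*Real.sqrt (Vc t) ≤ 2*Real.sqrt (Vc t)*A := by
        have h := mul_le_mul_of_nonneg_right hTA hsv
        calc 2*T*Real.sqrt (Vc t) = 2*(T*Real.sqrt (Vc t)) := by ring
          _ ≤ 2*(A*Real.sqrt (Vc t)) := by linarith only [h]
          _ = 2*Real.sqrt (Vc t)*A := by ring
      linarith only [hub, h4, h5, hnum', hTle]
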